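/- arXiv:2308.05488 — 3 statements merged into one kernel-verified Lean document; each statement's English description precedes it below -/
import Mathlib

section
/- Let (A_v, B_v, C_v, D_v) be a stable unitary realization with state dimension n_v and input/output dimension m, and let (A_w, B_w, C_w, D_w) be a stable unitary realization with state dimension n_w and the same input/output dimension m. Let Ω = ∑_{k=0}^{∞} A_v^k B_v B_wᴴ (A_wᴴ)^k (the unique solution of the Stein equation Ω = A_v Ω A_wᴴ + B_v B_wᴴ), let C∘ = D_v B_wᴴ + C_v Ω A_wᴴ, and let Q = ∑_{k=0}^{∞} A_w^k C∘ᴴ C∘ (A_wᴴ)^k (the unique solution of the Stein equation Q = A_w Q A_wᴴ + C∘ᴴ C∘). Then Q is a positive contraction: both Q and I − Q are positive semidefinite. -/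
/-!
The unitary matrix `[[A_v, B_v], [C_v, D_v]]` is an isometry. Applied to the block column
`[Ω A_wᴴ; B_wᴴ]`, which it maps to `[Ω; C∘]` by the Stein equation of `Ω`, it gives
`ΩᴴΩ + C∘ᴴC∘ = A_w ΩᴴΩ A_wᴴ + B_w B_wᴴ`. Together with the row identity
`A_w A_wᴴ + B_w B_wᴴ = 1` of the unitary matrix `[[A_w, B_w], [C_w, D_w]]`, this says that
`1 - ΩᴴΩ` solves the Stein equation defining `Q`. As `A_w` is stable, that equation has only one
solution, so `Q = 1 - ΩᴴΩ`, while `Q ≥ 0` holds termwise in its series.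
-/

open Matrix ComplexOrder Filter Topology

section BanachAlgebra

variable {A : Type*} [NormedRing A] [NormedAlgebra ℂ A] [CompleteSpace A] {a : A}

theorem spectralRadius_lt_one_of_forall_norm_lt_one (ha : ∀ μ ∈ spectrum ℂ a, ‖μ‖ < 1) :
    spectralRadius ℂ a < 1 := by
  rcases (spectrum ℂ a).eq_empty_or_nonempty with he | hne
  · simp [spectralRadius, he]
  · exact_mod_cast spectrum.spectralRadius_lt_of_forall_lt_of_nonempty hne (r := 1)
      fun μ hμ => by exact_mod_cast ha μ hμ

theorem tendsto_pow_atTop_nhds_zero_of_spectralRadius_lt_one (ha : spectralRadius ℂ a < 1) :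
    Tendsto (a ^ ·) atTop (𝓝 0) := by
  obtain ⟨r, hρr, hr⟩ := ENNReal.lt_iff_exists_nnreal_btwn.mp ha
  have hr1 : (r : ℝ) < 1 := by exact_mod_cast hr
  have hbound : ∀ᶠ n : ℕ in atTop, ‖a ^ n‖ ≤ (r : ℝ) ^ n := by
    have hgelfand := spectrum.pow_norm_pow_one_div_tendsto_nhds_spectralRadius a
    filter_upwards [hgelfand.eventually_lt_const hρr, eventually_gt_atTop 0] with n hn hn0
    rw [← ENNReal.ofReal_coe_nnreal, ENNReal.ofReal_lt_ofReal_iff', one_div,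
      Real.rpow_inv_lt_iff_of_pos (norm_nonneg _) r.coe_nonneg (by positivity),
      Real.rpow_natCast] at hn
    exact hn.1.le
  exact squeeze_zero_norm' hbound (tendsto_pow_atTop_nhds_zero_of_lt_one r.coe_nonneg hr1)

end BanachAlgebra

theorem Matrix.tendsto_pow_atTop_nhds_zero_of_forall_norm_lt_one {n : Type*} [Fintype n]
    [DecidableEq n] {A : Matrix n n ℂ} (hA : ∀ μ ∈ spectrum ℂ A, ‖μ‖ < 1) :
    Tendsto (A ^ ·) atTop (𝓝 0) :=
  -- any Banach algebra norm will do, as it induces the entrywise topology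
  letI : NormedRing (Matrix n n ℂ) := Matrix.linftyOpNormedRing
  letI : NormedAlgebra ℂ (Matrix n n ℂ) := Matrix.linftyOpNormedAlgebra
  tendsto_pow_atTop_nhds_zero_of_spectralRadius_lt_one
    (spectralRadius_lt_one_of_forall_norm_lt_one hA)

theorem eq_of_eq_mul_mul_add {R : Type*} [Ring R] [TopologicalSpace R] [ContinuousMul R]
    [T2Space R] {a b x s t : R} (ha : Tendsto (a ^ ·) atTop (𝓝 0))
    (hb : Tendsto (b ^ ·) atTop (𝓝 0)) (hs : s = a * s * b + x) (ht : t = a * t * b + x) :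
    s = t := by
  have hd : s - t = a * (s - t) * b := by
    rw [mul_sub, sub_mul]; nth_rw 1 [hs, ht]; abel
  have hiter : ∀ k : ℕ, a ^ k * (s - t) * b ^ k = s - t := by
    intro k
    induction k with
    | zero => simp
    | succ k ih =>
      calc a ^ (k + 1) * (s - t) * b ^ (k + 1) = a ^ k * (a * (s - t) * b) * b ^ k := by
            rw [pow_succ, pow_succ']; simp only [mul_assoc]
        _ = s - t := by rw [← hd, ih]
  have hlim : Tendsto (fun k : ℕ => a ^ k * (s - t) * b ^ k) atTop (𝓝 0) := by
    simpa using (ha.mul_const (s - t)).mul hb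
  simp only [hiter] at hlim
  exact sub_eq_zero.mp (tendsto_nhds_unique tendsto_const_nhds hlim)

theorem Matrix.eq_mul_mul_add_of_hasSum {l n R : Type*} [Fintype l] [Fintype n]
    [DecidableEq l] [DecidableEq n] [Ring R] [TopologicalSpace R] [IsTopologicalRing R]
    [T2Space R] {A : Matrix l l R} {B : Matrix n n R} {X S : Matrix l n R}
    (h : HasSum (fun k : ℕ => A ^ k * X * B ^ k) S) : S = A * S * B + X := by
  have hshift : HasSum (fun k : ℕ => A ^ (k + 1) * X * B ^ (k + 1)) (S - X) := by
    simpa using (hasSum_nat_add_iff' 1).mpr h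
  have hconj : HasSum (fun k : ℕ => A ^ (k + 1) * X * B ^ (k + 1)) (A * S * B) := by
    convert (h.map (addMonoidHomMulLeft A) (continuous_const.matrix_mul continuous_id)).map
      (addMonoidHomMulRight B) (continuous_id.matrix_mul continuous_const) using 1
    · funext k
      rw [pow_succ', pow_succ]
      simp only [Function.comp_apply, addMonoidHomMulLeft_apply, addMonoidHomMulRight_apply,
        Matrix.mul_assoc]
    · rfl
  rw [hconj.unique hshift]; abel

theorem Matrix.PosSemidef.of_hasSum {ι n 𝕜 : Type*} [Fintype n] [RCLike 𝕜]
    {f : ι → Matrix n n 𝕜} {S : Matrix n n 𝕜} (hf : ∀ i, (f i).PosSemidef) (h : HasSum f S) :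
    S.PosSemidef := by
  refine Matrix.posSemidef_iff_dotProduct_mulVec.mpr ⟨?_, fun x => ?_⟩
  · have h' : HasSum f Sᴴ := by simpa [fun i => (hf i).1.eq] using h.matrix_conjTranspose
    exact h'.unique h
  · let g : Matrix n n 𝕜 →+ 𝕜 :=
      { toFun := fun M => star x ⬝ᵥ M *ᵥ x
        map_zero' := by simp
        map_add' := fun M N => by simp [Matrix.add_mulVec, dotProduct_add] }
    have hg : Continuous g :=
      continuous_const.dotProduct (continuous_id.matrix_mulVec continuous_const)
    exact (h.map g hg).nonneg fun i => (hf i).dotProduct_mulVec_nonneg x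

section Blocks

variable {l m p R : Type*} [Fintype l] [Fintype m] [DecidableEq l]
  [DecidableEq m] [CommRing R] [StarRing R] {A : Matrix l l R} {B : Matrix l m R}
  {C : Matrix m l R} {D : Matrix m m R}

theorem Matrix.mul_conjTranspose_add_mul_conjTranspose_of_fromBlocks_mem_unitaryGroup
    (h : fromBlocks A B C D ∈ unitaryGroup (l ⊕ m) R) : A * Aᴴ + B * Bᴴ = 1 := by
  simpa [star_eq_conjTranspose, fromBlocks_conjTranspose, fromBlocks_multiply,
    ← fromBlocks_one] using congrArg toBlocks₁₁ (mem_unitaryGroup_iff.mp h)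

theorem Matrix.conjTranspose_mul_self_add_of_fromBlocks_mem_unitaryGroup
    (h : fromBlocks A B C D ∈ unitaryGroup (l ⊕ m) R) (X : Matrix l p R) (Y : Matrix m p R) :
    (A * X + B * Y)ᴴ * (A * X + B * Y) + (C * X + D * Y)ᴴ * (C * X + D * Y) =
      Xᴴ * X + Yᴴ * Y := by
  have hM : (fromBlocks A B C D)ᴴ * fromBlocks A B C D = 1 := mem_unitaryGroup_iff'.mp h
  have := calc
    (fromBlocks A B C D * fromRows X Y)ᴴ * (fromBlocks A B C D * fromRows X Y)
        = (fromRows X Y)ᴴ * ((fromBlocks A B C D)ᴴ * fromBlocks A B C D) * fromRows X Y := by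
          simp only [conjTranspose_mul, Matrix.mul_assoc]
      _ = (fromRows X Y)ᴴ * fromRows X Y := by rw [hM, Matrix.mul_one]
  simpa only [fromBlocks_mul_fromRows, conjTranspose_fromRows_eq_fromCols_conjTranspose,
    fromCols_mul_fromRows] using this

end Blocks

theorem one_sub_conjTranspose_mul_self_eq_stein {lv lw m R : Type*} [Fintype lv] [Fintype lw]
    [Fintype m] [DecidableEq lv] [DecidableEq lw] [DecidableEq m] [CommRing R] [StarRing R]
    {Av : Matrix lv lv R} {Bv : Matrix lv m R} {Cv : Matrix m lv R} {Dv : Matrix m m R}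
    {Aw : Matrix lw lw R} {Bw : Matrix lw m R} {Cw : Matrix m lw R} {Dw : Matrix m m R}
    (hv : fromBlocks Av Bv Cv Dv ∈ unitaryGroup (lv ⊕ m) R)
    (hw : fromBlocks Aw Bw Cw Dw ∈ unitaryGroup (lw ⊕ m) R) {Ω : Matrix lv lw R}
    (hΩ : Ω = Av * Ω * Awᴴ + Bv * Bwᴴ) :
    1 - Ωᴴ * Ω = Aw * (1 - Ωᴴ * Ω) * Awᴴ +
      (Dv * Bwᴴ + Cv * Ω * Awᴴ)ᴴ * (Dv * Bwᴴ + Cv * Ω * Awᴴ) := by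
  have hrow := mul_conjTranspose_add_mul_conjTranspose_of_fromBlocks_mem_unitaryGroup hw
  have hiso :=
    conjTranspose_mul_self_add_of_fromBlocks_mem_unitaryGroup hv
      (Ω * Awᴴ) Bwᴴ
  rw [← Matrix.mul_assoc, ← hΩ, ← Matrix.mul_assoc, add_comm (Cv * Ω * Awᴴ)] at hiso
  simp only [conjTranspose_mul, conjTranspose_conjTranspose, Matrix.mul_assoc] at hiso ⊢
  rw [eq_sub_of_add_eq' hiso, Matrix.sub_mul, Matrix.one_mul, Matrix.mul_sub, ← hrow]
  simp only [Matrix.mul_assoc]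
  abel

theorem stmt_3_general {nv nw m : ℕ}
    (Av : Matrix (Fin nv) (Fin nv) ℂ) (Bv : Matrix (Fin nv) (Fin m) ℂ)
    (Cv : Matrix (Fin m) (Fin nv) ℂ) (Dv : Matrix (Fin m) (Fin m) ℂ)
    (Aw : Matrix (Fin nw) (Fin nw) ℂ) (Bw : Matrix (Fin nw) (Fin m) ℂ)
    (Cw : Matrix (Fin m) (Fin nw) ℂ) (Dw : Matrix (Fin m) (Fin m) ℂ)
    (hv_unitary : fromBlocks Av Bv Cv Dv ∈ Matrix.unitaryGroup (Fin nv ⊕ Fin m) ℂ)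
    (hw_unitary : fromBlocks Aw Bw Cw Dw ∈ Matrix.unitaryGroup (Fin nw ⊕ Fin m) ℂ)
    (hw_stable : ∀ μ ∈ spectrum ℂ Aw, ‖μ‖ < 1)
    (Ω : Matrix (Fin nv) (Fin nw) ℂ)
    (hΩ : HasSum (fun k : ℕ => Av ^ k * (Bv * Bwᴴ) * Awᴴ ^ k) Ω)
    (Co : Matrix (Fin m) (Fin nw) ℂ)
    (hCo : Co = Dv * Bwᴴ + Cv * Ω * Awᴴ)
    (Q : Matrix (Fin nw) (Fin nw) ℂ)
    (hQ : HasSum (fun k : ℕ => Aw ^ k * (Coᴴ * Co) * Awᴴ ^ k) Q) :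
    Q.PosSemidef ∧ (1 - Q).PosSemidef := by
  have hAw : Tendsto (Aw ^ ·) atTop (𝓝 0) :=
    tendsto_pow_atTop_nhds_zero_of_forall_norm_lt_one hw_stable
  have hAwH : Tendsto (Awᴴ ^ ·) atTop (𝓝 0) := by
    simpa [Function.comp_def, conjTranspose_pow] using
      (continuous_id.matrix_conjTranspose.tendsto 0).comp hAw
  have hQ_eq : Q = 1 - Ωᴴ * Ω :=
    eq_of_eq_mul_mul_add hAw hAwH (eq_mul_mul_add_of_hasSum hQ)
      (hCo ▸ one_sub_conjTranspose_mul_self_eq_stein hv_unitary hw_unitary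
        (eq_mul_mul_add_of_hasSum hΩ))
  refine ⟨PosSemidef.of_hasSum (fun k => ?_) hQ, ?_⟩
  · simpa only [conjTranspose_pow] using
      (posSemidef_conjTranspose_mul_self Co).mul_mul_conjTranspose_same (Aw ^ k)
  · simpa only [hQ_eq, sub_sub_cancel] using posSemidef_conjTranspose_mul_self Ω

/-- Given stable unitary realizations of `V` and `W`, with `Ω` the solution of the
Stein equation `Ω = A_v Ω A_wᴴ + B_v B_wᴴ` (given as the sum of the series),
`C∘ = D_v B_wᴴ + C_v Ω A_wᴴ`, and `Q` the solution of `Q = A_w Q A_wᴴ + C∘ᴴ C∘`,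
the matrix `Q` is a positive contraction. -/
theorem stmt_3 {nv nw m : ℕ}
    (Av : Matrix (Fin nv) (Fin nv) ℂ) (Bv : Matrix (Fin nv) (Fin m) ℂ)
    (Cv : Matrix (Fin m) (Fin nv) ℂ) (Dv : Matrix (Fin m) (Fin m) ℂ)
    (Aw : Matrix (Fin nw) (Fin nw) ℂ) (Bw : Matrix (Fin nw) (Fin m) ℂ)
    (Cw : Matrix (Fin m) (Fin nw) ℂ) (Dw : Matrix (Fin m) (Fin m) ℂ)
    (hv_unitary : fromBlocks Av Bv Cv Dv ∈ Matrix.unitaryGroup (Fin nv ⊕ Fin m) ℂ)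
    (hv_stable : ∀ μ ∈ spectrum ℂ Av, ‖μ‖ < 1)
    (hw_unitary : fromBlocks Aw Bw Cw Dw ∈ Matrix.unitaryGroup (Fin nw ⊕ Fin m) ℂ)
    (hw_stable : ∀ μ ∈ spectrum ℂ Aw, ‖μ‖ < 1)
    (Ω : Matrix (Fin nv) (Fin nw) ℂ)
    (hΩ : HasSum (fun k : ℕ => Av ^ k * (Bv * Bwᴴ) * Awᴴ ^ k) Ω)
    (Co : Matrix (Fin m) (Fin nw) ℂ)
    (hCo : Co = Dv * Bwᴴ + Cv * Ω * Awᴴ)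
    (Q : Matrix (Fin nw) (Fin nw) ℂ)
    (hQ : HasSum (fun k : ℕ => Aw ^ k * (Coᴴ * Co) * Awᴴ ^ k) Q) :
    Q.PosSemidef ∧ (1 - Q).PosSemidef :=
  stmt_3_general Av Bv Cv Dv Aw Bw Cw Dw hv_unitary hw_unitary hw_stable Ω hΩ Co hCo Q hQ
end

section
/- Let A be an n×n complex matrix such that I − Aᴴ A is positive semidefinite of rank 1 and every eigenvalue of A lies in the open unit disc, and let C be a 1×n complex matrix with Cᴴ C = I − Aᴴ A. Let φ be a finite Blaschke product of degree d with d < n, and let x ∈ ℂⁿ be a nonzero vector with φ(Aᴴ)ᴴ φ(Aᴴ) x = x. Then for every z ∈ ℂ with |z| < 1 one has φ(z) · ( C (I − z·A)⁻¹ x ) = C (I − z·A)⁻¹ (φ(Aᴴ) x), and moreover the scalar function z ↦ C (I − z·A)⁻¹ x is not identically zero on the open unit disc, so that φ(z) = (C (I − z·A)⁻¹ φ(Aᴴ) x) / (C (I − z·A)⁻¹ x) wherever the denominator is nonzero. -/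
open Matrix ComplexOrder

/-- The finite Blaschke product determined by the unimodular constant `ζ` and the
zeros `α 0, …, α (d-1)` in the open unit disc. -/
noncomputable def blaschkeFun {d : ℕ} (ζ : ℂ) (α : Fin d → ℂ) (z : ℂ) : ℂ :=
  ζ * ∏ k : Fin d, (z - α k) / (1 - (starRingEnd ℂ) (α k) * z)

/-- `φ(A)` for the finite Blaschke product `φ` determined by `ζ` and `α`. -/
noncomputable def blaschkeMatrix {n d : ℕ} (ζ : ℂ) (α : Fin d → ℂ)
    (A : Matrix (Fin n) (Fin n) ℂ) : Matrix (Fin n) (Fin n) ℂ :=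
  ζ • (List.ofFn fun k : Fin d =>
    (A - α k • 1) * (1 - (starRingEnd ℂ) (α k) • A)⁻¹).prod

/-!
Since `A` is a contraction, so is `Aᴴ`, and each factor `b = (Aᴴ - α)(1 - ᾱ Aᴴ)⁻¹` of `φ(Aᴴ)`
is a contraction with `1 - bᴴ b = (1 - |α|²) N⁻ᴴ (1 - A Aᴴ) N⁻¹`, `N = 1 - ᾱ Aᴴ`. A vector
that `φ(Aᴴ)` maps isometrically is therefore mapped isometrically by every factor in turn, so
each factor acts on a vector `u` with `(1 - A Aᴴ) N⁻¹ u = 0`. For such `u` the relation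
`Cᴴ C = 1 - Aᴴ A` gives `C Aᴴ N⁻¹ u = 0`, and this turns `C (1 - z A)⁻¹ b u` into
`(z - α)/(1 - ᾱ z) · C (1 - z A)⁻¹ u`; multiplying the factors produces `φ(z)`.

If `z ↦ C (1 - z A)⁻¹ x` vanished on the disc, the vectors with this property would form an
`A`-invariant subspace of `ker C` containing `x`. An eigenvector `v` of `A` in it has `C v = 0`,
hence `‖A v‖ = ‖v‖`, so its eigenvalue lies on the unit circle, contradicting stability.
-/

noncomputable def mobius (α z : ℂ) : ℂ :=
  (z - α) / (1 - starRingEnd ℂ α * z)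

namespace Matrix

variable {n : Type*} [Fintype n]

section RCLike

variable {𝕜 : Type*} [RCLike 𝕜]

lemma PosSemidef.mulVec_eq_zero_of_add {A B : Matrix n n 𝕜} (hA : A.PosSemidef)
    (hB : B.PosSemidef) {x : n → 𝕜} (hx : (A + B) *ᵥ x = 0) :
    A *ᵥ x = 0 ∧ B *ᵥ x = 0 := by
  have hsum : star x ⬝ᵥ (A *ᵥ x) + star x ⬝ᵥ (B *ᵥ x) = 0 := by
    rw [← dotProduct_add, ← add_mulVec, hx, dotProduct_zero]
  obtain ⟨hAx, hBx⟩ := (add_eq_zero_iff_of_nonneg (hA.dotProduct_mulVec_nonneg x)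
    (hB.dotProduct_mulVec_nonneg x)).1 hsum
  exact ⟨(hA.dotProduct_mulVec_zero_iff x).1 hAx, (hB.dotProduct_mulVec_zero_iff x).1 hBx⟩

variable [DecidableEq n]

lemma one_sub_conjTranspose_mul_self_mul (M N : Matrix n n 𝕜) :
    1 - (M * N)ᴴ * (M * N) = Nᴴ * (1 - Mᴴ * M) * N + (1 - Nᴴ * N) := by
  simp only [conjTranspose_mul, Matrix.mul_sub, Matrix.sub_mul, Matrix.mul_one, Matrix.mul_assoc]
  abel

lemma mulVec_eq_self_of_conjTranspose_mul_self_mul {M N : Matrix n n 𝕜}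
    (hM : (1 - Mᴴ * M).PosSemidef) (hN : (1 - Nᴴ * N).PosSemidef) {x : n → 𝕜}
    (hx : ((M * N)ᴴ * (M * N)) *ᵥ x = x) :
    (Mᴴ * M) *ᵥ (N *ᵥ x) = N *ᵥ x ∧ (Nᴴ * N) *ᵥ x = x := by
  have h0 : (1 - (M * N)ᴴ * (M * N)) *ᵥ x = 0 := by
    rw [sub_mulVec, one_mulVec, hx, sub_self]
  rw [one_sub_conjTranspose_mul_self_mul] at h0
  obtain ⟨hMN, hN0⟩ := (hM.conjTranspose_mul_mul_same N).mulVec_eq_zero_of_add hN h0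
  have hMN' : star x ⬝ᵥ ((Nᴴ * (1 - Mᴴ * M) * N) *ᵥ x) = 0 := by rw [hMN, dotProduct_zero]
  rw [← mulVec_mulVec, ← mulVec_mulVec, dotProduct_mulVec, ← star_mulVec,
    hM.dotProduct_mulVec_zero_iff] at hMN'
  rw [sub_mulVec, one_mulVec, sub_eq_zero] at hMN' hN0
  exact ⟨hMN'.symm, hN0.symm⟩

lemma mulVec_conjTranspose_mulVec_eq_zero {m : Type*} [Fintype m] {A : Matrix n n 𝕜}
    {C : Matrix m n 𝕜} (hC : Cᴴ * C = 1 - Aᴴ * A) {y : n → 𝕜} (hy : (A * Aᴴ) *ᵥ y = y) :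
    C *ᵥ (Aᴴ *ᵥ y) = 0 := by
  rw [← conjTranspose_mul_self_mulVec_eq_zero, hC, sub_mulVec, one_mulVec, mulVec_mulVec,
    Matrix.mul_assoc, ← mulVec_mulVec, hy, sub_self]

end RCLike

variable [DecidableEq n]

section L2

open scoped Matrix.Norms.L2Operator MatrixOrder

lemma posSemidef_one_sub_conjTranspose_mul_self_iff (A : Matrix n n ℂ) :
    (1 - Aᴴ * A).PosSemidef ↔ ‖A‖ ≤ 1 := by
  rw [← le_iff, ← star_eq_conjTranspose,
    ← CStarAlgebra.norm_le_one_iff_of_nonneg _ (star_mul_self_nonneg A),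
    CStarRing.norm_star_mul_self, ← sq, sq_le_one_iff₀ (norm_nonneg A)]

lemma PosSemidef.one_sub_mul_conjTranspose_self {A : Matrix n n ℂ}
    (hA : (1 - Aᴴ * A).PosSemidef) : (1 - A * Aᴴ).PosSemidef := by
  simpa using (posSemidef_one_sub_conjTranspose_mul_self_iff Aᴴ).2
    ((l2_opNorm_conjTranspose A).trans_le ((posSemidef_one_sub_conjTranspose_mul_self_iff A).1 hA))

lemma PosSemidef.one_sub_conjTranspose_mul_self_mul {A B : Matrix n n ℂ}
    (hA : (1 - Aᴴ * A).PosSemidef) (hB : (1 - Bᴴ * B).PosSemidef) :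
    (1 - (A * B)ᴴ * (A * B)).PosSemidef := by
  rw [posSemidef_one_sub_conjTranspose_mul_self_iff] at *
  exact (l2_opNorm_mul A B).trans (mul_le_one₀ hA (norm_nonneg B) hB)

lemma isUnit_one_sub_smul_of_posSemidef {A : Matrix n n ℂ} (hA : (1 - Aᴴ * A).PosSemidef)
    {c : ℂ} (hc : ‖c‖ < 1) : IsUnit (1 - c • A) := by
  refine isUnit_one_sub_of_norm_lt_one ((norm_smul_le c A).trans_lt ?_)
  exact (mul_le_of_le_one_right (norm_nonneg c)
    ((posSemidef_one_sub_conjTranspose_mul_self_iff A).1 hA)).trans_lt hc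

end L2

noncomputable def mobiusMatrix (α : ℂ) (B : Matrix n n ℂ) : Matrix n n ℂ :=
  (B - α • 1) * (1 - starRingEnd ℂ α • B)⁻¹

lemma conjTranspose_mul_self_sub_mobius (α : ℂ) (B : Matrix n n ℂ) :
    (1 - starRingEnd ℂ α • B)ᴴ * (1 - starRingEnd ℂ α • B) - (B - α • 1)ᴴ * (B - α • 1) =
      (1 - ‖α‖ ^ 2) • (1 - Bᴴ * B) := by
  have h (M : Matrix n n ℂ) : ‖α‖ ^ 2 • M = (starRingEnd ℂ α * α) • M := by
    rw [Complex.conj_mul', ← Complex.ofReal_pow, Complex.coe_smul]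
  simp only [conjTranspose_sub, conjTranspose_one, conjTranspose_smul, Complex.star_def,
    Complex.conj_conj, Matrix.sub_mul, Matrix.mul_sub, Matrix.one_mul, Matrix.mul_one,
    smul_mul_assoc, mul_smul_comm, smul_smul, sub_smul, one_smul, smul_sub, h]
  module

lemma one_sub_conjTranspose_mul_self_mobiusMatrix {α : ℂ} {B : Matrix n n ℂ}
    (hN : IsUnit (1 - starRingEnd ℂ α • B)) :
    1 - (mobiusMatrix α B)ᴴ * mobiusMatrix α B =
      (1 - ‖α‖ ^ 2) • ((1 - starRingEnd ℂ α • B)⁻¹ᴴ * (1 - Bᴴ * B) *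
        (1 - starRingEnd ℂ α • B)⁻¹) := by
  set N := 1 - starRingEnd ℂ α • B
  have hN' : N * N⁻¹ = 1 := mul_nonsing_inv N ((isUnit_iff_isUnit_det N).1 hN)
  have h1 : (1 : Matrix n n ℂ) = N⁻¹ᴴ * (Nᴴ * N) * N⁻¹ := by
    rw [← Matrix.mul_assoc, ← conjTranspose_mul, Matrix.mul_assoc, hN', conjTranspose_one,
      Matrix.one_mul]
  calc 1 - (mobiusMatrix α B)ᴴ * mobiusMatrix α B
      = N⁻¹ᴴ * (Nᴴ * N - (B - α • 1)ᴴ * (B - α • 1)) * N⁻¹ := by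
        rw [Matrix.mul_sub, Matrix.sub_mul, ← h1, mobiusMatrix, conjTranspose_mul]
        simp only [Matrix.mul_assoc]; rfl
    _ = _ := by
        rw [conjTranspose_mul_self_sub_mobius, mul_smul_comm, smul_mul_assoc]

noncomputable def mobiusProd {d : ℕ} (α : Fin d → ℂ) (B : Matrix n n ℂ) : Matrix n n ℂ :=
  (List.ofFn fun k => mobiusMatrix (α k) B).prod

lemma mobiusProd_succ {d : ℕ} (α : Fin (d + 1) → ℂ) (B : Matrix n n ℂ) :
    mobiusProd α B = mobiusMatrix (α 0) B * mobiusProd (Fin.tail α) B := by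
  rw [mobiusProd, List.ofFn_succ, List.prod_cons]
  rfl

lemma PosSemidef.one_sub_mobiusMatrix {B : Matrix n n ℂ} (hB : (1 - Bᴴ * B).PosSemidef)
    {α : ℂ} (hα : ‖α‖ < 1) :
    (1 - (mobiusMatrix α B)ᴴ * mobiusMatrix α B).PosSemidef := by
  rw [one_sub_conjTranspose_mul_self_mobiusMatrix
    (isUnit_one_sub_smul_of_posSemidef hB (by simpa using hα))]
  exact (hB.conjTranspose_mul_mul_same _).smul (by nlinarith [norm_nonneg α])

lemma conjTranspose_mul_self_mulVec_inv_eq_of_mobiusMatrix {B : Matrix n n ℂ}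
    (hB : (1 - Bᴴ * B).PosSemidef) {α : ℂ} (hα : ‖α‖ < 1) {u : n → ℂ}
    (hu : ((mobiusMatrix α B)ᴴ * mobiusMatrix α B) *ᵥ u = u) :
    (Bᴴ * B) *ᵥ ((1 - starRingEnd ℂ α • B)⁻¹ *ᵥ u) = (1 - starRingEnd ℂ α • B)⁻¹ *ᵥ u := by
  have hN := isUnit_one_sub_smul_of_posSemidef hB (c := starRingEnd ℂ α) (by simpa using hα)
  have hNN : (1 - starRingEnd ℂ α • B)ᴴ * (1 - starRingEnd ℂ α • B)⁻¹ᴴ = 1 := by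
    rw [← conjTranspose_mul, nonsing_inv_mul _ ((isUnit_iff_isUnit_det _).1 hN),
      conjTranspose_one]
  have hα' : (1 - ‖α‖ ^ 2 : ℝ) ≠ 0 := by nlinarith [norm_nonneg α]
  have h0 : (1 - (mobiusMatrix α B)ᴴ * mobiusMatrix α B) *ᵥ u = 0 := by
    rw [sub_mulVec, one_mulVec, hu, sub_self]
  rw [one_sub_conjTranspose_mul_self_mobiusMatrix hN, smul_mulVec, smul_eq_zero_iff_right hα',
    ← mulVec_mulVec, ← mulVec_mulVec] at h0
  have hw := congrArg ((1 - starRingEnd ℂ α • B)ᴴ *ᵥ ·) h0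
  rw [mulVec_mulVec, hNN, one_mulVec, mulVec_zero] at hw
  rw [sub_mulVec, one_mulVec, sub_eq_zero] at hw
  exact hw.symm

lemma mulVec_inv_one_sub_smul_mulVec_mobiusMatrix {m : Type*} [Fintype m]
    {A : Matrix n n ℂ} (hA : (1 - Aᴴ * A).PosSemidef) {C : Matrix m n ℂ}
    (hC : Cᴴ * C = 1 - Aᴴ * A) {α z : ℂ} (hα : ‖α‖ < 1) (hz : ‖z‖ < 1) {u : n → ℂ}
    (hu : ((mobiusMatrix α Aᴴ)ᴴ * mobiusMatrix α Aᴴ) *ᵥ u = u) :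
    C *ᵥ ((1 - z • A)⁻¹ *ᵥ (mobiusMatrix α Aᴴ *ᵥ u)) =
      mobius α z • C *ᵥ ((1 - z • A)⁻¹ *ᵥ u) := by
  have hA' : (1 - Aᴴᴴ * Aᴴ).PosSemidef := by
    simpa using hA.one_sub_mul_conjTranspose_self
  have hN := isUnit_one_sub_smul_of_posSemidef hA' (c := starRingEnd ℂ α) (by simpa using hα)
  have hzA := isUnit_one_sub_smul_of_posSemidef hA hz
  set y := (1 - starRingEnd ℂ α • Aᴴ)⁻¹ *ᵥ u
  have hy : (A * Aᴴ) *ᵥ y = y := by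
    simpa only [conjTranspose_conjTranspose] using
      conjTranspose_mul_self_mulVec_inv_eq_of_mobiusMatrix hA' hα hu
  have hNy : u = (1 - starRingEnd ℂ α • Aᴴ) *ᵥ y := by
    rw [mulVec_mulVec, mul_nonsing_inv _ ((isUnit_iff_isUnit_det _).1 hN), one_mulVec]
  -- `C (1 - z A)⁻¹` turns the last term into a multiple of `C Aᴴ y = 0`
  have hvec : (1 - starRingEnd ℂ α * z) • (mobiusMatrix α Aᴴ *ᵥ u) =
      (z - α) • u + (1 - starRingEnd ℂ α * α) • ((1 - z • A) *ᵥ (Aᴴ *ᵥ y)) := by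
    have hy' : A *ᵥ (Aᴴ *ᵥ y) = y := by rwa [mulVec_mulVec]
    rw [mobiusMatrix, ← mulVec_mulVec]
    change _ • ((Aᴴ - α • 1) *ᵥ y) = _
    rw [hNy]
    simp only [sub_mulVec, one_mulVec, smul_mulVec, hy']
    module
  have hden : 1 - starRingEnd ℂ α * z ≠ 0 := by
    have h1 : ‖starRingEnd ℂ α * z‖ < 1 := by
      simpa using mul_lt_one_of_nonneg_of_lt_one_left (norm_nonneg α) hα hz.le
    exact sub_ne_zero.2 fun h => by simp [← h] at h1
  have happ := congrArg (fun w => C *ᵥ ((1 - z • A)⁻¹ *ᵥ w)) hvec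
  simp only [mulVec_smul, mulVec_add, mulVec_mulVec (Aᴴ *ᵥ y) (1 - z • A)⁻¹,
    nonsing_inv_mul _ ((isUnit_iff_isUnit_det _).1 hzA), one_mulVec,
    mulVec_conjTranspose_mulVec_eq_zero hC hy, smul_zero, add_zero] at happ
  rw [mobius, div_eq_inv_mul, mul_smul, ← happ, inv_smul_smul₀ hden]

lemma PosSemidef.one_sub_mobiusProd {B : Matrix n n ℂ} (hB : (1 - Bᴴ * B).PosSemidef) {d : ℕ}
    (α : Fin d → ℂ) (hα : ∀ k, ‖α k‖ < 1) :
    (1 - (mobiusProd α B)ᴴ * mobiusProd α B).PosSemidef := by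
  induction d with
  | zero => simpa [mobiusProd] using PosSemidef.zero
  | succ d ih =>
    rw [mobiusProd_succ]
    exact (hB.one_sub_mobiusMatrix (hα 0)).one_sub_conjTranspose_mul_self_mul
      (ih (Fin.tail α) fun k => hα k.succ)

lemma mulVec_inv_one_sub_smul_mulVec_mobiusProd {m : Type*} [Fintype m]
    {A : Matrix n n ℂ} (hA : (1 - Aᴴ * A).PosSemidef) {C : Matrix m n ℂ}
    (hC : Cᴴ * C = 1 - Aᴴ * A) {d : ℕ} (α : Fin d → ℂ) (hα : ∀ k, ‖α k‖ < 1) {z : ℂ}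
    (hz : ‖z‖ < 1) {x : n → ℂ} (hx : ((mobiusProd α Aᴴ)ᴴ * mobiusProd α Aᴴ) *ᵥ x = x) :
    C *ᵥ ((1 - z • A)⁻¹ *ᵥ (mobiusProd α Aᴴ *ᵥ x)) =
      (∏ k, mobius (α k) z) • C *ᵥ ((1 - z • A)⁻¹ *ᵥ x) := by
  induction d with
  | zero => simp [mobiusProd]
  | succ d ih =>
    have hA' : (1 - Aᴴᴴ * Aᴴ).PosSemidef := by
      simpa using hA.one_sub_mul_conjTranspose_self
    rw [mobiusProd_succ] at hx ⊢
    obtain ⟨hhead, htail⟩ := mulVec_eq_self_of_conjTranspose_mul_self_mul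
      (hA'.one_sub_mobiusMatrix (hα 0)) (hA'.one_sub_mobiusProd (Fin.tail α) fun k => hα k.succ) hx
    rw [← mulVec_mulVec, mulVec_inv_one_sub_smul_mulVec_mobiusMatrix hA hC (hα 0) hz hhead,
      ih (Fin.tail α) (fun k => hα k.succ) htail, smul_smul, Fin.prod_univ_succ]
    rfl

lemma _root_.Continuous.continuousAt_matrix_inv {X 𝕜 : Type*} [TopologicalSpace X]
    [NormedField 𝕜] {M : X → Matrix n n 𝕜} (hM : Continuous M) {x₀ : X}
    (h : (M x₀).det ≠ 0) : ContinuousAt (fun x => (M x)⁻¹) x₀ := by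
  simp_rw [inv_def, Ring.inverse_eq_inv']
  exact (hM.matrix_det.continuousAt.inv₀ h).smul hM.matrix_adjugate.continuousAt

lemma mem_spectrum_of_mulVec_eq_smul {K : Type*} [Field K] {A : Matrix n n K} {μ : K}
    {v : n → K} (hv : v ≠ 0) (hAv : A *ᵥ v = μ • v) : μ ∈ spectrum K A := by
  rw [← spectrum_toLin']
  exact (Module.End.hasEigenvalue_of_hasEigenvector
    ⟨Module.End.mem_eigenspace_iff.2 (by simpa using hAv), hv⟩).mem_spectrum

lemma norm_eq_one_of_mulVec_eq_smul {m : Type*} [Fintype m] {A : Matrix n n ℂ}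
    {C : Matrix m n ℂ} (hC : Cᴴ * C = 1 - Aᴴ * A) {μ : ℂ} {v : n → ℂ} (hv : v ≠ 0)
    (hAv : A *ᵥ v = μ • v) (hCv : C *ᵥ v = 0) : ‖μ‖ = 1 := by
  have hAAv : (Aᴴ * A) *ᵥ v = v := by
    have h := congrArg (Cᴴ *ᵥ ·) hCv
    simp only [mulVec_mulVec, hC, sub_mulVec, one_mulVec, mulVec_zero, sub_eq_zero] at h
    exact h.symm
  have hμ : star v ⬝ᵥ v = (starRingEnd ℂ μ * μ) * (star v ⬝ᵥ v) := by
    calc star v ⬝ᵥ v = star v ⬝ᵥ ((Aᴴ * A) *ᵥ v) := by rw [hAAv]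
      _ = star (A *ᵥ v) ⬝ᵥ (A *ᵥ v) := by
        rw [← mulVec_mulVec, dotProduct_mulVec, ← star_mulVec]
      _ = (starRingEnd ℂ μ * μ) * (star v ⬝ᵥ v) := by
        rw [hAv, star_smul, smul_dotProduct, dotProduct_smul, smul_eq_mul, smul_eq_mul,
          ← mul_assoc, Complex.star_def]
  have h1 := (mul_eq_right₀ (mt dotProduct_star_self_eq_zero.1 hv)).1 hμ.symm
  rw [Complex.conj_mul', ← Complex.ofReal_pow, Complex.ofReal_eq_one] at h1
  exact (pow_eq_one_iff_of_nonneg (norm_nonneg μ) two_ne_zero).1 h1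

lemma exists_eigenvector_of_mulVec_inv_one_sub_smul_eq_zero {m : Type*} [Fintype m]
    {A : Matrix n n ℂ} (hA : ∀ z : ℂ, ‖z‖ < 1 → IsUnit (1 - z • A)) (C : Matrix m n ℂ)
    {x : n → ℂ} (hx : x ≠ 0) (h : ∀ z : ℂ, ‖z‖ < 1 → C *ᵥ ((1 - z • A)⁻¹ *ᵥ x) = 0) :
    ∃ μ : ℂ, ∃ v : n → ℂ, v ≠ 0 ∧ A *ᵥ v = μ • v ∧ C *ᵥ v = 0 := by
  let V : Submodule ℂ (n → ℂ) :=
    ⨅ z ∈ Metric.ball (0 : ℂ) 1, LinearMap.ker (C * (1 - z • A)⁻¹).mulVecLin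
  have hV (v : n → ℂ) : v ∈ V ↔ ∀ z : ℂ, ‖z‖ < 1 → C *ᵥ ((1 - z • A)⁻¹ *ᵥ v) = 0 := by
    simp [V, Submodule.mem_iInf, mulVec_mulVec]
  have hker (v : n → ℂ) (hv : v ∈ V) : C *ᵥ v = 0 := by simpa using (hV v).1 hv 0 (by simp)
  have hAV (v : n → ℂ) (hv : v ∈ V) : A.mulVecLin v ∈ V := by
    set g : ℂ → m → ℂ := fun z => C *ᵥ ((1 - z • A)⁻¹ *ᵥ (A *ᵥ v))
    have hpunct (z : ℂ) (hz : ‖z‖ < 1) (hz0 : z ≠ 0) : g z = 0 := by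
      have hres : z • ((1 - z • A)⁻¹ * A) = (1 - z • A)⁻¹ - 1 := by
        calc z • ((1 - z • A)⁻¹ * A) = (1 - z • A)⁻¹ * (1 - (1 - z • A)) := by
              rw [sub_sub_cancel, mul_smul_comm]
          _ = _ := by
              rw [Matrix.mul_sub, Matrix.mul_one,
                nonsing_inv_mul _ ((isUnit_iff_isUnit_det _).1 (hA z hz))]
      have h1 := congrArg (fun M => C *ᵥ (M *ᵥ v)) hres
      simp only [smul_mulVec, mulVec_smul, sub_mulVec, one_mulVec, mulVec_sub, (hV v).1 hv z hz,
        hker v hv, sub_zero, ← mulVec_mulVec, smul_eq_zero, hz0, false_or] at h1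
      exact h1
    have hg : ContinuousAt g 0 := by
      have hinv : ContinuousAt (fun z : ℂ => (1 - z • A)⁻¹) 0 :=
        (continuous_const.sub (continuous_id.smul continuous_const)).continuousAt_matrix_inv
          (by simp)
      exact ((continuous_const.matrix_mulVec (continuous_id.matrix_mulVec continuous_const)
        ).continuousAt (f := fun M : Matrix n n ℂ => C *ᵥ (M *ᵥ (A *ᵥ v)))).comp hinv
    -- the resolvent identity says nothing at `z = 0`: pass to the limit
    have hg0 : g 0 = 0 := by
      refine ((hg.eventuallyEq_nhds_iff_eventuallyEq_nhdsNE continuousAt_const).1 ?_).eq_of_nhds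
      filter_upwards [nhdsWithin_le_nhds (Metric.ball_mem_nhds (0 : ℂ) one_pos),
        self_mem_nhdsWithin] with z hz hz0
      exact hpunct z (by simpa using hz) hz0
    refine (hV _).2 fun z hz => ?_
    rcases eq_or_ne z 0 with rfl | hz0
    · exact hg0
    · exact hpunct z hz hz0
  have : Nontrivial V := ⟨⟨⟨x, (hV x).2 h⟩, 0, by simpa using hx⟩⟩
  obtain ⟨μ, hμ⟩ := Module.End.exists_eigenvalue (A.mulVecLin.restrict hAV)
  obtain ⟨v, hv⟩ := hμ.exists_hasEigenvector
  refine ⟨μ, v, fun h0 => hv.2 (Subtype.ext h0), ?_, hker v v.2⟩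
  simpa using congrArg Subtype.val hv.apply_eq_smul

end Matrix

theorem stmt_11_general {n d : ℕ}
    (A : Matrix (Fin n) (Fin n) ℂ)
    (hA_contr : (1 - Aᴴ * A).PosSemidef)
    (hA_stable : ∀ μ ∈ spectrum ℂ A, ‖μ‖ < 1)
    (C : Matrix (Fin 1) (Fin n) ℂ) (hC : Cᴴ * C = 1 - Aᴴ * A)
    (ζ : ℂ) (hζ : ‖ζ‖ = 1) (α : Fin d → ℂ) (hα : ∀ k, ‖α k‖ < 1)
    (x : Fin n → ℂ) (hx : x ≠ 0)
    (hx1 : ((blaschkeMatrix ζ α Aᴴ)ᴴ * blaschkeMatrix ζ α Aᴴ) *ᵥ x = x) :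
    (∀ z : ℂ, ‖z‖ < 1 →
      blaschkeFun ζ α z * (C *ᵥ ((1 - z • A)⁻¹ *ᵥ x)) 0 =
        (C *ᵥ ((1 - z • A)⁻¹ *ᵥ (blaschkeMatrix ζ α Aᴴ *ᵥ x))) 0) ∧
    (∃ z : ℂ, ‖z‖ < 1 ∧ (C *ᵥ ((1 - z • A)⁻¹ *ᵥ x)) 0 ≠ 0) ∧
    (∀ z : ℂ, ‖z‖ < 1 → (C *ᵥ ((1 - z • A)⁻¹ *ᵥ x)) 0 ≠ 0 →
      blaschkeFun ζ α z =
        (C *ᵥ ((1 - z • A)⁻¹ *ᵥ (blaschkeMatrix ζ α Aᴴ *ᵥ x))) 0 /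
          (C *ᵥ ((1 - z • A)⁻¹ *ᵥ x)) 0) := by
  have hP : blaschkeMatrix ζ α Aᴴ = ζ • mobiusProd α Aᴴ := rfl
  have hζ' : star ζ * ζ = 1 := by
    rw [Complex.star_def, Complex.conj_mul', hζ, Complex.ofReal_one, one_pow]
  have hxP : ((mobiusProd α Aᴴ)ᴴ * mobiusProd α Aᴴ) *ᵥ x = x := by
    rwa [hP, conjTranspose_smul, smul_mul_smul_comm, hζ', one_smul] at hx1
  have hfactor (z : ℂ) (hz : ‖z‖ < 1) : blaschkeFun ζ α z * (C *ᵥ ((1 - z • A)⁻¹ *ᵥ x)) 0 =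
      (C *ᵥ ((1 - z • A)⁻¹ *ᵥ (blaschkeMatrix ζ α Aᴴ *ᵥ x))) 0 := by
    rw [hP, smul_mulVec, mulVec_smul, mulVec_smul,
      mulVec_inv_one_sub_smul_mulVec_mobiusProd hA_contr hC α hα hz hxP]
    simp [blaschkeFun, mobius, mul_assoc]
  refine ⟨hfactor, ?_, fun z hz h0 => (eq_div_iff h0).2 (hfactor z hz)⟩
  by_contra! hzero
  obtain ⟨μ, v, hv, hAv, hCv⟩ := exists_eigenvector_of_mulVec_inv_one_sub_smul_eq_zero
    (fun z hz => isUnit_one_sub_smul_of_posSemidef hA_contr hz) C hx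
    (fun z hz => funext fun i => by rw [Subsingleton.elim i 0]; exact hzero z hz)
  exact (hA_stable μ (mem_spectrum_of_mulVec_eq_smul hv hAv)).ne
    (norm_eq_one_of_mulVec_eq_smul hC hv hAv hCv)

/-- Proposition 4.4: if `A` is a stable contraction with defect index one,
`Cᴴ C = I - Aᴴ A` with `C` a row matrix, `φ` is a finite Blaschke product of degree
`d < n` and `x ≠ 0` satisfies `φ(Aᴴ)ᴴ φ(Aᴴ) x = x`, then
`φ(z)·(C (I - zA)⁻¹ x) = C (I - zA)⁻¹ φ(Aᴴ) x` on the open unit disc, the function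
`z ↦ C (I - zA)⁻¹ x` is not identically zero there, and hence
`φ(z) = (C (I - zA)⁻¹ φ(Aᴴ) x)/(C (I - zA)⁻¹ x)` wherever the denominator is
nonzero. -/
theorem stmt_11 {n d : ℕ}
    (A : Matrix (Fin n) (Fin n) ℂ)
    (hA_contr : (1 - Aᴴ * A).PosSemidef)
    (hA_defect : (1 - Aᴴ * A).rank = 1)
    (hA_stable : ∀ μ ∈ spectrum ℂ A, ‖μ‖ < 1)
    (C : Matrix (Fin 1) (Fin n) ℂ) (hC : Cᴴ * C = 1 - Aᴴ * A)
    (ζ : ℂ) (hζ : ‖ζ‖ = 1) (α : Fin d → ℂ) (hα : ∀ k, ‖α k‖ < 1)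
    (hd : d < n)
    (x : Fin n → ℂ) (hx : x ≠ 0)
    (hx1 : ((blaschkeMatrix ζ α Aᴴ)ᴴ * blaschkeMatrix ζ α Aᴴ) *ᵥ x = x) :
    (∀ z : ℂ, ‖z‖ < 1 →
      blaschkeFun ζ α z * (C *ᵥ ((1 - z • A)⁻¹ *ᵥ x)) 0 =
        (C *ᵥ ((1 - z • A)⁻¹ *ᵥ (blaschkeMatrix ζ α Aᴴ *ᵥ x))) 0) ∧
    (∃ z : ℂ, ‖z‖ < 1 ∧ (C *ᵥ ((1 - z • A)⁻¹ *ᵥ x)) 0 ≠ 0) ∧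
    (∀ z : ℂ, ‖z‖ < 1 → (C *ᵥ ((1 - z • A)⁻¹ *ᵥ x)) 0 ≠ 0 →
      blaschkeFun ζ α z =
        (C *ᵥ ((1 - z • A)⁻¹ *ᵥ (blaschkeMatrix ζ α Aᴴ *ᵥ x))) 0 /
          (C *ᵥ ((1 - z • A)⁻¹ *ᵥ x)) 0) :=
  stmt_11_general A hA_contr hA_stable C hC ζ hζ α hα x hx hx1
end

section
/- Let (A, B, C, D) be a stable unitary realization with state dimension n and input/output dimension m = 1 (so C is a 1×n matrix), let φ be a finite Blaschke product of degree d with d < n, and let φ̃ denote its conjugate Blaschke product, so that φ̃(A) = (φ(Aᴴ))ᴴ. Suppose x ∈ ℂⁿ is a nonzero vector with φ̃(A)ᴴ φ̃(A) x = x. Then φ̃(A) x ≠ 0 and for every z ∈ ℂ with |z| < 1 one has C (I − z·A)⁻¹ x = φ(z) · ( C (I − z·A)⁻¹ (φ̃(A) x) ); consequently φ(z) = (C (I − z·A)⁻¹ x) / (C (I − z·A)⁻¹ φ̃(A) x) wherever the denominator is nonzero. -/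
open Matrix

/-!
Unitarity of the realization makes the column `[A; C]` an isometry. The Blaschke factor
`F_a = (A - ā)(1 - aA)⁻¹` turns it into another isometric column
`[F_a; √(1 - |a|²) C(1 - aA)⁻¹]`, so `‖F_a w‖ ≤ ‖w‖`, with equality only if
`C(1 - aA)⁻¹ w = 0`. In that case the resolvent identity
`(1 - āz)(1 - zA)⁻¹ = (z - a)(1 - zA)⁻¹ F_a + (1 - |a|²)(1 - aA)⁻¹`
gives `C(1 - zA)⁻¹ w = (z - a)/(1 - āz) · C(1 - zA)⁻¹ F_a w`. Since `φ̃(A)` is a unimodular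
multiple of the product of the `F_{α_k}` and preserves the norm of `x`, every factor preserves the
norm of the vector it is applied to, and these identities multiply to the claim.
-/

open ComplexConjugate
open scoped ComplexOrder

theorem Complex.one_sub_conj_mul_ne_zero {a z : ℂ} (ha : ‖a‖ < 1) (hz : ‖z‖ < 1) :
    1 - conj a * z ≠ 0 := by
  have h : ‖conj a * z‖ < 1 := by
    rw [norm_mul, Complex.norm_conj]
    exact mul_lt_one_of_nonneg_of_lt_one_left (norm_nonneg a) ha hz.le
  exact sub_ne_zero.mpr fun h1 => by rw [← h1, norm_one] at h; exact lt_irrefl _ h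

namespace Matrix

variable {ι m o R : Type*} [Fintype ι] [Fintype m] [Fintype o]

theorem conjTranspose_mul_add_conjTranspose_mul_of_fromBlocks_mem_unitaryGroup
    [DecidableEq ι] [DecidableEq o] [CommRing R] [StarRing R]
    {A : Matrix ι ι R} {B : Matrix ι o R} {C : Matrix o ι R} {D : Matrix o o R}
    (h : fromBlocks A B C D ∈ unitaryGroup (ι ⊕ o) R) : Aᴴ * A + Cᴴ * C = 1 := by
  have h11 := congrArg toBlocks₁₁ (Unitary.star_mul_self_of_mem h)
  rwa [star_eq_conjTranspose, fromBlocks_conjTranspose, fromBlocks_multiply, ← fromBlocks_one,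
    toBlocks_fromBlocks₁₁, toBlocks_fromBlocks₁₁] at h11

theorem star_mulVec_dotProduct_mulVec [CommRing R] [StarRing R] (M : Matrix m ι R) (v : ι → R) :
    star (M *ᵥ v) ⬝ᵥ (M *ᵥ v) = star v ⬝ᵥ ((Mᴴ * M) *ᵥ v) := by
  rw [star_mulVec, ← dotProduct_mulVec, mulVec_mulVec]

section IsometricColumn

variable [DecidableEq ι] [CommRing R] [StarRing R] {M : Matrix m ι R} {N : Matrix o ι R}

theorem star_mulVec_dotProduct_mulVec_add_of_isometric
    (h : Mᴴ * M + Nᴴ * N = 1) (v : ι → R) :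
    star (M *ᵥ v) ⬝ᵥ (M *ᵥ v) + star (N *ᵥ v) ⬝ᵥ (N *ᵥ v) = star v ⬝ᵥ v := by
  rw [star_mulVec_dotProduct_mulVec, star_mulVec_dotProduct_mulVec, ← dotProduct_add,
    ← add_mulVec, h, one_mulVec]

theorem star_mulVec_dotProduct_mulVec_list_prod_le [Preorder R] {l : List (Matrix ι ι R)}
    (hl : ∀ M ∈ l, ∀ v, star (M *ᵥ v) ⬝ᵥ (M *ᵥ v) ≤ star v ⬝ᵥ v) (v : ι → R) :
    star (l.prod *ᵥ v) ⬝ᵥ (l.prod *ᵥ v) ≤ star v ⬝ᵥ v := by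
  induction l with
  | nil => simp
  | cons M l ih =>
    obtain ⟨hM, hl⟩ := List.forall_mem_cons.mp hl
    rw [List.prod_cons, ← mulVec_mulVec]
    exact (hM _).trans (ih hl)

variable [PartialOrder R] [StarOrderedRing R]

theorem star_mulVec_dotProduct_mulVec_le_of_isometric
    (h : Mᴴ * M + Nᴴ * N = 1) (v : ι → R) :
    star (M *ᵥ v) ⬝ᵥ (M *ᵥ v) ≤ star v ⬝ᵥ v := by
  rw [← star_mulVec_dotProduct_mulVec_add_of_isometric h v]
  exact le_add_of_nonneg_right (dotProduct_star_self_nonneg _)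

theorem mulVec_eq_zero_of_isometric [NoZeroDivisors R]
    (h : Mᴴ * M + Nᴴ * N = 1) {v : ι → R}
    (hv : star (M *ᵥ v) ⬝ᵥ (M *ᵥ v) = star v ⬝ᵥ v) : N *ᵥ v = 0 := by
  rw [← star_mulVec_dotProduct_mulVec_add_of_isometric h v, left_eq_add] at hv
  exact dotProduct_star_self_eq_zero.mp hv

end IsometricColumn

section BlaschkeFactor

-- `transfer` in the names below refers to the vector `C *ᵥ ((1 - z • A)⁻¹ *ᵥ w)`.

variable [DecidableEq ι] {A : Matrix ι ι ℂ} {C : Matrix o ι ℂ}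

theorem isUnit_det_one_sub_smul_of_isometric (hAC : Aᴴ * A + Cᴴ * C = 1) {c : ℂ}
    (hc : ‖c‖ < 1) : IsUnit (1 - c • A).det := by
  rw [isUnit_iff_ne_zero]
  intro hdet
  obtain ⟨v, hv0, hv⟩ := exists_mulVec_eq_zero_iff.mpr hdet
  rw [sub_mulVec, one_mulVec, smul_mulVec, sub_eq_zero] at hv
  have hc2 : (‖c‖ : ℂ) ^ 2 < 1 := by
    rw [← Complex.ofReal_pow]
    exact_mod_cast pow_lt_one₀ (norm_nonneg c) hc two_ne_zero
  refine lt_irrefl (star v ⬝ᵥ v) ?_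
  calc star v ⬝ᵥ v = (‖c‖ : ℂ) ^ 2 * (star (A *ᵥ v) ⬝ᵥ (A *ᵥ v)) := by
        conv_lhs => rw [hv]
        rw [star_smul, smul_dotProduct, dotProduct_smul, smul_smul, smul_eq_mul,
          ← Complex.mul_conj', mul_comm c]
        rfl
    _ ≤ (‖c‖ : ℂ) ^ 2 * (star v ⬝ᵥ v) :=
        mul_le_mul_of_nonneg_left (star_mulVec_dotProduct_mulVec_le_of_isometric hAC v)
          (pow_nonneg (Complex.zero_le_real.mpr (norm_nonneg c)) 2)
    _ < star v ⬝ᵥ v := mul_lt_of_lt_one_left (dotProduct_star_self_pos_iff.mpr hv0) hc2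

variable (A) in
noncomputable def blaschkeFactor (a : ℂ) : Matrix ι ι ℂ :=
  (A - conj a • 1) * (1 - a • A)⁻¹

theorem blaschkeFactor_isometric (hAC : Aᴴ * A + Cᴴ * C = 1) {a : ℂ} (ha : ‖a‖ < 1) :
    (blaschkeFactor A a)ᴴ * blaschkeFactor A a +
      ((√(1 - ‖a‖ ^ 2) : ℂ) • (C * (1 - a • A)⁻¹))ᴴ *
        ((√(1 - ‖a‖ ^ 2) : ℂ) • (C * (1 - a • A)⁻¹)) = 1 := by
  set R := (1 - a • A)⁻¹
  have hR : (1 - a • A) * R = 1 := mul_nonsing_inv _ (isUnit_det_one_sub_smul_of_isometric hAC ha)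
  have hR_star : Rᴴ * (1 - a • A)ᴴ = 1 := by rw [← conjTranspose_mul, hR, conjTranspose_one]
  have hsqrt : star (√(1 - ‖a‖ ^ 2) : ℂ) * √(1 - ‖a‖ ^ 2) = 1 - a * conj a := by
    rw [Complex.star_def, Complex.conj_ofReal, ← Complex.ofReal_mul, Real.mul_self_sqrt,
      Complex.mul_conj']
    · push_cast; ring
    · nlinarith [norm_nonneg a]
  have hkey : (A - conj a • 1)ᴴ * (A - conj a • 1) =
      (1 - a • A)ᴴ * (1 - a • A) - (1 - a * conj a) • (Cᴴ * C) := by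
    rw [eq_sub_of_add_eq' hAC]
    simp only [conjTranspose_sub, conjTranspose_smul, conjTranspose_one, Matrix.mul_sub,
      Matrix.sub_mul, Matrix.smul_mul, Matrix.mul_smul, Matrix.one_mul, Matrix.mul_one,
      smul_sub, Complex.star_def, Complex.conj_conj]
    module
  have hF : (blaschkeFactor A a)ᴴ * blaschkeFactor A a =
      1 - (1 - a * conj a) • ((C * R)ᴴ * (C * R)) := by
    calc (blaschkeFactor A a)ᴴ * blaschkeFactor A a
        = Rᴴ * ((A - conj a • 1)ᴴ * (A - conj a • 1)) * R := by
          simp only [blaschkeFactor, conjTranspose_mul, Matrix.mul_assoc]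
          rfl
      _ = (Rᴴ * (1 - a • A)ᴴ) * ((1 - a • A) * R) -
            (1 - a * conj a) • ((C * R)ᴴ * (C * R)) := by
          rw [hkey, Matrix.mul_sub, Matrix.sub_mul, Matrix.mul_smul, Matrix.smul_mul,
            conjTranspose_mul]
          simp only [Matrix.mul_assoc]
      _ = _ := by rw [hR, hR_star, Matrix.one_mul]
  rw [hF, conjTranspose_smul, Matrix.smul_mul, Matrix.mul_smul, smul_smul, hsqrt, sub_add_cancel]

theorem resolvent_blaschke_identity {a z : ℂ} (ha : IsUnit (1 - a • A).det)
    (hz : IsUnit (1 - z • A).det) :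
    (1 - conj a * z) • (1 - z • A)⁻¹ =
      (z - a) • ((1 - z • A)⁻¹ * blaschkeFactor A a) + (1 - a * conj a) • (1 - a • A)⁻¹ := by
  have hkey : (1 - conj a * z) • (1 - a • A) =
      (z - a) • (A - conj a • 1) + (1 - a * conj a) • (1 - z • A) := by
    module
  calc (1 - conj a * z) • (1 - z • A)⁻¹
      = (1 - z • A)⁻¹ * ((1 - conj a * z) • (1 - a • A)) * (1 - a • A)⁻¹ := by
        rw [Matrix.mul_smul, Matrix.smul_mul, Matrix.mul_assoc, mul_nonsing_inv _ ha,
          Matrix.mul_one]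
    _ = _ := by
        rw [hkey, Matrix.mul_add, Matrix.add_mul, Matrix.mul_smul, Matrix.smul_mul,
          Matrix.mul_smul, Matrix.smul_mul, nonsing_inv_mul _ hz, Matrix.one_mul, blaschkeFactor,
          Matrix.mul_assoc]

theorem transfer_eq_smul_transfer_blaschkeFactor (hAC : Aᴴ * A + Cᴴ * C = 1) {a z : ℂ}
    (ha : ‖a‖ < 1) (hz : ‖z‖ < 1) {w : ι → ℂ} (hw : C *ᵥ ((1 - a • A)⁻¹ *ᵥ w) = 0) :
    C *ᵥ ((1 - z • A)⁻¹ *ᵥ w) =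
      ((z - a) / (1 - conj a * z)) • C *ᵥ ((1 - z • A)⁻¹ *ᵥ (blaschkeFactor A a *ᵥ w)) := by
  have hid := congrArg (fun M => C *ᵥ (M *ᵥ w)) (resolvent_blaschke_identity
    (isUnit_det_one_sub_smul_of_isometric hAC ha) (isUnit_det_one_sub_smul_of_isometric hAC hz))
  simp only [smul_mulVec, add_mulVec, mulVec_add, mulVec_smul, hw, smul_zero, add_zero,
    ← mulVec_mulVec] at hid
  rw [div_eq_inv_mul, mul_smul, ← hid, inv_smul_smul₀ (Complex.one_sub_conj_mul_ne_zero ha hz)]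

theorem transfer_eq_zero_of_blaschkeFactor_norm_eq (hAC : Aᴴ * A + Cᴴ * C = 1)
    {a : ℂ} (ha : ‖a‖ < 1) {w : ι → ℂ}
    (hw : star (blaschkeFactor A a *ᵥ w) ⬝ᵥ (blaschkeFactor A a *ᵥ w) = star w ⬝ᵥ w) :
    C *ᵥ ((1 - a • A)⁻¹ *ᵥ w) = 0 := by
  have h := mulVec_eq_zero_of_isometric (blaschkeFactor_isometric hAC ha) hw
  rw [smul_mulVec, smul_eq_zero, ← mulVec_mulVec] at h
  refine h.resolve_left (Complex.ofReal_ne_zero.mpr (Real.sqrt_ne_zero'.mpr ?_))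
  nlinarith [norm_nonneg a]

theorem transfer_eq_prod_smul_transfer_prod_blaschkeFactor (hAC : Aᴴ * A + Cᴴ * C = 1)
    {l : List ℂ} (hl : ∀ a ∈ l, ‖a‖ < 1) {x : ι → ℂ}
    (hx : star ((l.map (blaschkeFactor A)).prod *ᵥ x) ⬝ᵥ ((l.map (blaschkeFactor A)).prod *ᵥ x) =
      star x ⬝ᵥ x)
    {z : ℂ} (hz : ‖z‖ < 1) :
    C *ᵥ ((1 - z • A)⁻¹ *ᵥ x) = (l.map fun a => (z - a) / (1 - conj a * z)).prod •
      C *ᵥ ((1 - z • A)⁻¹ *ᵥ ((l.map (blaschkeFactor A)).prod *ᵥ x)) := by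
  induction l with
  | nil => simp
  | cons a l ih =>
    obtain ⟨ha, hl⟩ := List.forall_mem_cons.mp hl
    simp only [List.map_cons, List.prod_cons, ← mulVec_mulVec] at hx ⊢
    set w := (l.map (blaschkeFactor A)).prod *ᵥ x
    have hFw := star_mulVec_dotProduct_mulVec_le_of_isometric (blaschkeFactor_isometric hAC ha) w
    have hw := star_mulVec_dotProduct_mulVec_list_prod_le (List.forall_mem_map.mpr fun b hb =>
      star_mulVec_dotProduct_mulVec_le_of_isometric (blaschkeFactor_isometric hAC (hl b hb))) x
    have hwx : star w ⬝ᵥ w = star x ⬝ᵥ x := le_antisymm hw (hx ▸ hFw)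
    rw [ih hl hwx, transfer_eq_smul_transfer_blaschkeFactor hAC ha hz
      (transfer_eq_zero_of_blaschkeFactor_norm_eq hAC ha (hx.trans hwx.symm)), smul_smul,
      mul_comm]

end BlaschkeFactor

end Matrix

theorem blaschkeMatrix_conj {n d : ℕ} (ζ : ℂ) (α : Fin d → ℂ) (A : Matrix (Fin n) (Fin n) ℂ) :
    blaschkeMatrix ζ (fun k => conj (α k)) A = ζ • ((List.ofFn α).map (blaschkeFactor A)).prod := by
  simp only [blaschkeMatrix, blaschkeFactor, List.map_ofFn, Function.comp_def, Complex.conj_conj]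

theorem stmt_14_general {n d : ℕ}
    (A : Matrix (Fin n) (Fin n) ℂ) (B : Matrix (Fin n) (Fin 1) ℂ)
    (C : Matrix (Fin 1) (Fin n) ℂ) (D : Matrix (Fin 1) (Fin 1) ℂ)
    (h_unitary : fromBlocks A B C D ∈ Matrix.unitaryGroup (Fin n ⊕ Fin 1) ℂ)
    (ζ : ℂ) (hζ : ‖ζ‖ = 1) (α : Fin d → ℂ) (hα : ∀ k, ‖α k‖ < 1)
    (x : Fin n → ℂ) (hx : x ≠ 0)
    (hx1 : ((blaschkeMatrix ((starRingEnd ℂ) ζ) (fun k => (starRingEnd ℂ) (α k)) A)ᴴ *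
        blaschkeMatrix ((starRingEnd ℂ) ζ) (fun k => (starRingEnd ℂ) (α k)) A) *ᵥ x = x) :
    (blaschkeMatrix ((starRingEnd ℂ) ζ) (fun k => (starRingEnd ℂ) (α k)) A) *ᵥ x ≠ 0 ∧
    (∀ z : ℂ, ‖z‖ < 1 →
      (C *ᵥ ((1 - z • A)⁻¹ *ᵥ x)) 0 =
        blaschkeFun ζ α z *
          (C *ᵥ ((1 - z • A)⁻¹ *ᵥ
            ((blaschkeMatrix ((starRingEnd ℂ) ζ) (fun k => (starRingEnd ℂ) (α k)) A) *ᵥ x))) 0) ∧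
    (∀ z : ℂ, ‖z‖ < 1 →
      (C *ᵥ ((1 - z • A)⁻¹ *ᵥ
          ((blaschkeMatrix ((starRingEnd ℂ) ζ) (fun k => (starRingEnd ℂ) (α k)) A) *ᵥ x))) 0 ≠ 0 →
      blaschkeFun ζ α z =
        (C *ᵥ ((1 - z • A)⁻¹ *ᵥ x)) 0 /
          (C *ᵥ ((1 - z • A)⁻¹ *ᵥ
            ((blaschkeMatrix ((starRingEnd ℂ) ζ) (fun k => (starRingEnd ℂ) (α k)) A) *ᵥ x))) 0) := by
  set M := blaschkeMatrix (conj ζ) (fun k => conj (α k)) A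
  set G := ((List.ofFn α).map (blaschkeFactor A)).prod
  have hAC := conjTranspose_mul_add_conjTranspose_mul_of_fromBlocks_mem_unitaryGroup h_unitary
  have hMG : M = conj ζ • G := blaschkeMatrix_conj _ α A
  have hζ_conj : ζ * conj ζ = 1 := by rw [Complex.mul_conj', hζ]; norm_num
  have hGx : star (G *ᵥ x) ⬝ᵥ (G *ᵥ x) = star x ⬝ᵥ x := by
    calc star (G *ᵥ x) ⬝ᵥ (G *ᵥ x) = star (M *ᵥ x) ⬝ᵥ (M *ᵥ x) := by
          rw [hMG, smul_mulVec, star_smul, smul_dotProduct, dotProduct_smul, smul_smul,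
            Complex.star_def, Complex.conj_conj, hζ_conj, one_smul]
      _ = star x ⬝ᵥ x := by rw [star_mulVec_dotProduct_mulVec, hx1]
  have htransfer : ∀ z : ℂ, ‖z‖ < 1 → C *ᵥ ((1 - z • A)⁻¹ *ᵥ x) =
      blaschkeFun ζ α z • C *ᵥ ((1 - z • A)⁻¹ *ᵥ (M *ᵥ x)) := by
    intro z hz
    rw [transfer_eq_prod_smul_transfer_prod_blaschkeFactor hAC
      (List.forall_mem_ofFn_iff.mpr hα) hGx hz, hMG, smul_mulVec, mulVec_smul, mulVec_smul,
      smul_smul, blaschkeFun, List.map_ofFn, List.prod_ofFn, mul_right_comm, hζ_conj, one_mul]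
    rfl
  refine ⟨fun h0 => hx ?_, fun z hz => by simpa using congrFun (htransfer z hz) 0, ?_⟩
  · rw [← hx1, ← mulVec_mulVec, h0, mulVec_zero]
  · intro z hz hne
    rw [congrFun (htransfer z hz) 0, Pi.smul_apply, smul_eq_mul, mul_div_assoc, div_self hne,
      mul_one]

/-- Part 4 of Lemma 4.2: for a stable unitary realization `(A, B, C, D)` of a
Blaschke product of degree `n` (scalar input/output, `m = 1`), a Blaschke product
`φ` of degree `d < n` and a nonzero `x` with `φ̃(A)ᴴ φ̃(A) x = x` (where
`φ̃(A) = blaschkeMatrix (conj ζ) (conj ∘ α) A = (φ(Aᴴ))ᴴ`), one has `φ̃(A) x ≠ 0`,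
`C (I - zA)⁻¹ x = φ(z) · C (I - zA)⁻¹ φ̃(A) x` on the open unit disc, and hence
`φ(z) = (C (I - zA)⁻¹ x)/(C (I - zA)⁻¹ φ̃(A) x)` wherever the denominator is
nonzero. -/
theorem stmt_14 {n d : ℕ}
    (A : Matrix (Fin n) (Fin n) ℂ) (B : Matrix (Fin n) (Fin 1) ℂ)
    (C : Matrix (Fin 1) (Fin n) ℂ) (D : Matrix (Fin 1) (Fin 1) ℂ)
    (h_unitary : fromBlocks A B C D ∈ Matrix.unitaryGroup (Fin n ⊕ Fin 1) ℂ)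
    (h_stable : ∀ μ ∈ spectrum ℂ A, ‖μ‖ < 1)
    (ζ : ℂ) (hζ : ‖ζ‖ = 1) (α : Fin d → ℂ) (hα : ∀ k, ‖α k‖ < 1)
    (hd : d < n)
    (x : Fin n → ℂ) (hx : x ≠ 0)
    (hx1 : ((blaschkeMatrix ((starRingEnd ℂ) ζ) (fun k => (starRingEnd ℂ) (α k)) A)ᴴ *
        blaschkeMatrix ((starRingEnd ℂ) ζ) (fun k => (starRingEnd ℂ) (α k)) A) *ᵥ x = x) :
    (blaschkeMatrix ((starRingEnd ℂ) ζ) (fun k => (starRingEnd ℂ) (α k)) A) *ᵥ x ≠ 0 ∧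
    (∀ z : ℂ, ‖z‖ < 1 →
      (C *ᵥ ((1 - z • A)⁻¹ *ᵥ x)) 0 =
        blaschkeFun ζ α z *
          (C *ᵥ ((1 - z • A)⁻¹ *ᵥ
            ((blaschkeMatrix ((starRingEnd ℂ) ζ) (fun k => (starRingEnd ℂ) (α k)) A) *ᵥ x))) 0) ∧
    (∀ z : ℂ, ‖z‖ < 1 →
      (C *ᵥ ((1 - z • A)⁻¹ *ᵥ
          ((blaschkeMatrix ((starRingEnd ℂ) ζ) (fun k => (starRingEnd ℂ) (α k)) A) *ᵥ x))) 0 ≠ 0 →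
      blaschkeFun ζ α z =
        (C *ᵥ ((1 - z • A)⁻¹ *ᵥ x)) 0 /
          (C *ᵥ ((1 - z • A)⁻¹ *ᵥ
            ((blaschkeMatrix ((starRingEnd ℂ) ζ) (fun k => (starRingEnd ℂ) (α k)) A) *ᵥ x))) 0) :=
  stmt_14_general A B C D h_unitary ζ hζ α hα x hx hx1
end
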